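/- arXiv:1504.05482 — 2 statements merged into one kernel-verified Lean document; each statement's English description precedes it below -/
import Mathlib

section
/- For any prime p and any integer k with 0 ≤ k ≤ p-1, the Gaussian binomial coefficient [p-1 choose k]_q satisfies [p-1 choose k]_q · q^{C(k+1,2)} ≡ (-1)^k (mod [p]_q) in ℤ[q], where C(k+1,2) = k(k+1)/2. -/
open Polynomial Finset

/-- The q-integer `[n]_q = 1 + q + ⋯ + q^{n-1}` as a polynomial in `ℤ[q]`. -/
noncomputable def qint (n : ℕ) : Polynomial ℤ := ∑ i ∈ Finset.range n, X ^ i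

/-- The q-factorial `[n]_q! = [n]_q [n-1]_q ⋯ [1]_q`. -/
noncomputable def qfact : ℕ → Polynomial ℤ
  | 0 => 1
  | n + 1 => qint (n + 1) * qfact n

/-- The Gaussian (q-)binomial coefficient `[n choose k]_q` as a polynomial in `ℤ[q]`,
defined by the q-Pascal recurrence; it equals `∏_{i=1}^k (1-q^{n-i+1})/(1-q^i)` for
`0 ≤ k ≤ n` and `0` otherwise. -/
noncomputable def qbinom : ℕ → ℕ → Polynomial ℤ
  | _, 0 => 1
  | 0, _ + 1 => 0
  | n + 1, k + 1 => qbinom n k + X ^ (k + 1) * qbinom n (k + 1)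

/-!
Evaluate at a primitive `n`-th root of unity `ζ`. The q-Pascal rule gives
`(1 - q^(n-k)) [n choose k]_q = (1 - q^(k+1)) [n choose k+1]_q`; for `n - 1` in place of `n`
and `q = ζ` the left factor is `1 - ζ^(-(k+1))`, so `ζ^(k+1) [n-1 choose k+1]_ζ = -[n-1 choose k]_ζ`
and induction gives `[n-1 choose k]_ζ ζ^(k(k+1)/2) = (-1)^k`. Hence `Φ_n` divides the difference,
and `Φ_p = [p]_q` for `p` prime.
-/

lemma qbinom_zero_right (n : ℕ) : qbinom n 0 = 1 := by
  cases n <;> rfl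

lemma qbinom_eq_zero_of_lt : ∀ {n k : ℕ}, n < k → qbinom n k = 0
  | _, 0, h => absurd h (Nat.not_lt_zero _)
  | 0, _ + 1, _ => rfl
  | n + 1, k + 1, h => by
    rw [qbinom, qbinom_eq_zero_of_lt (by omega : n < k),
      qbinom_eq_zero_of_lt (by omega : n < k + 1)]
    ring

-- For `n ≤ k` both sides vanish (truncated subtraction gives `X ^ 0 = 1` on the left).
theorem one_sub_X_pow_mul_qbinom : ∀ n k : ℕ,
    (1 - X ^ (n - k)) * qbinom n k = (1 - X ^ (k + 1)) * qbinom n (k + 1)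
  | 0, 0 => by simp [qbinom]
  | 0, k + 1 => by simp [qbinom]
  | n + 1, 0 => by
    have ih := one_sub_X_pow_mul_qbinom n 0
    simp only [Nat.sub_zero, qbinom_zero_right] at ih ⊢
    rw [qbinom, qbinom_zero_right]
    linear_combination X * ih
  | n + 1, k + 1 => by
    rw [Nat.add_sub_add_right]
    rcases lt_or_ge k n with hkn | hnk
    · have ih := one_sub_X_pow_mul_qbinom n k
      have ih' := one_sub_X_pow_mul_qbinom n (k + 1)
      have hpow : (X : ℤ[X]) ^ (n - k) = X ^ (n - (k + 1)) * X := by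
        rw [← pow_succ]; congr 1; omega
      rw [hpow] at ih ⊢
      rw [qbinom, qbinom]
      linear_combination ih + X ^ (k + 2) * ih'
    · rw [Nat.sub_eq_zero_of_le hnk, qbinom_eq_zero_of_lt (by omega : n + 1 < k + 1 + 1)]
      ring

namespace IsPrimitiveRoot

variable {R : Type*} [CommRing R] [IsDomain R] {ζ : R} {n : ℕ}

theorem pow_mul_aeval_qbinom_succ (hζ : IsPrimitiveRoot ζ n) {k : ℕ} (hk : k + 1 < n) :
    ζ ^ (k + 1) * aeval ζ (qbinom (n - 1) (k + 1)) = -aeval ζ (qbinom (n - 1) k) := by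
  have hratio := congrArg (aeval ζ) (one_sub_X_pow_mul_qbinom (n - 1) k)
  simp only [map_mul, map_sub, map_one, map_pow, aeval_X] at hratio
  have hζn : ζ ^ (k + 1) * ζ ^ (n - 1 - k) = 1 := by
    rw [← pow_add, show k + 1 + (n - 1 - k) = n by omega, hζ.pow_eq_one]
  have hne : 1 - ζ ^ (k + 1) ≠ 0 :=
    sub_ne_zero.mpr (hζ.pow_ne_one_of_pos_of_lt k.succ_ne_zero hk).symm
  refine mul_left_cancel₀ hne ?_
  linear_combination -(ζ ^ (k + 1)) * hratio - aeval ζ (qbinom (n - 1) k) * hζn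

theorem aeval_qbinom_mul_pow_choose (hζ : IsPrimitiveRoot ζ n) :
    ∀ k < n, aeval ζ (qbinom (n - 1) k) * ζ ^ ((k + 1).choose 2) = (-1) ^ k
  | 0, _ => by simp [qbinom_zero_right]
  | k + 1, hk => by
    have ih := hζ.aeval_qbinom_mul_pow_choose k (by omega)
    have hstep := hζ.pow_mul_aeval_qbinom_succ hk
    rw [Nat.choose_succ_succ', Nat.choose_one_right, pow_add]
    linear_combination ζ ^ ((k + 1).choose 2) * hstep - ih

end IsPrimitiveRoot

theorem cyclotomic_dvd_qbinom_mul_X_pow_sub {n k : ℕ} (hk : k < n) :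
    cyclotomic n ℤ ∣ qbinom (n - 1) k * X ^ ((k + 1).choose 2) - (-1) ^ k := by
  have hn : n ≠ 0 := by omega
  have hζ := Complex.isPrimitiveRoot_exp n hn
  rw [cyclotomic_eq_minpoly hζ (Nat.pos_of_ne_zero hn)]
  refine minpoly.isIntegrallyClosed_dvd (hζ.isIntegral (Nat.pos_of_ne_zero hn)) ?_
  simp only [map_sub, map_mul, map_pow, map_neg, map_one, aeval_X]
  rw [hζ.aeval_qbinom_mul_pow_choose k hk, sub_self]

/-- for a prime `p` and `0 ≤ k ≤ p-1`,
`[p]_q` divides `[p-1 choose k]_q q^{k(k+1)/2} - (-1)^k` in `ℤ[q]`. -/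
theorem stmt8 (p k : ℕ) (hp : p.Prime) (hk : k ≤ p - 1) :
    qint p ∣ qbinom (p - 1) k * X ^ ((k + 1).choose 2) - (-1) ^ k := by
  have : Fact p.Prime := ⟨hp⟩
  have hqint : qint p = cyclotomic p ℤ := by rw [cyclotomic_prime ℤ p, qint]
  rw [hqint]
  exact cyclotomic_dvd_qbinom_mul_X_pow_sub (by have := hp.pos; omega)
end

section
/- If p is prime and a, k are nonnegative integers with a < p, k < p, and a + k ≥ p, then the Gaussian binomial coefficient [a+k choose a]_q is divisible by [p]_q in ℤ[q]. -/
open Polynomial Finset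

lemma qint_ne_zero {n : ℕ} (h : 0 < n) : qint n ≠ 0 := by
  intro h0
  have := congrArg (Polynomial.eval 1) h0
  simp [qint, Polynomial.eval_finset_sum] at this
  omega

lemma qint_natDegree_le (n : ℕ) : (qint n).natDegree ≤ n - 1 := by
  apply Polynomial.natDegree_sum_le_of_forall_le
  intro i hi
  simp only [Finset.mem_range] at hi
  simpa using Nat.le_sub_one_of_lt hi

lemma qint_add (a b : ℕ) : qint (a + b) = qint a + X ^ a * qint b := by
  simp [qint, Finset.sum_range_add, pow_add, Finset.mul_sum]

lemma qbinom_eq_zero : ∀ n k, n < k → qbinom n k = 0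
  | _, 0, h => by omega
  | 0, k + 1, _ => rfl
  | n + 1, k + 1, h => by
    rw [qbinom, qbinom_eq_zero n k (by omega), qbinom_eq_zero n (k+1) (by omega)]
    ring

lemma qbinom_self : ∀ n, qbinom n n = 1
  | 0 => rfl
  | n + 1 => by
    rw [qbinom, qbinom_self n, qbinom_eq_zero n (n+1) (by omega)]
    ring

lemma qbinom_mul_qfact : ∀ n k, k ≤ n → qbinom n k * (qfact k * qfact (n - k)) = qfact n
  | 0, 0, _ => by simp [qbinom, qfact]
  | n + 1, 0, _ => by simp [qbinom, qfact]
  | n + 1, j + 1, h => by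
    rcases Nat.lt_or_ge j n with hj | hj
    · have h1 := qbinom_mul_qfact n j (by omega)
      have h2 := qbinom_mul_qfact n (j + 1) (by omega)
      have e1 : n + 1 - (j + 1) = n - j := by omega
      have hnj : n - j = (n - j - 1) + 1 := by omega
      have hnj2 : n - (j + 1) = n - j - 1 := by omega
      rw [qbinom, e1, hnj]
      rw [hnj2] at h2
      rw [hnj] at h1
      have key : qint (n + 1) = qint (j + 1) + X ^ (j+1) * qint (n - j - 1 + 1) := by
        have h3 : (j + 1) + (n - j - 1 + 1) = n + 1 := by omega
        rw [← h3, qint_add]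
      rw [show qfact (n+1) = qint (n+1) * qfact n from rfl, key]
      rw [show qfact (n - j - 1 + 1) = qint (n - j - 1 + 1) * qfact (n - j - 1) from rfl] at h1 ⊢
      rw [show qfact (j + 1) = qint (j + 1) * qfact j from rfl] at h2 ⊢
      linear_combination qint (j+1) * h1 + X ^ (j+1) * qint (n - j - 1 + 1) * h2
    · have hjn : j = n := by omega
      rw [hjn, Nat.sub_self, qbinom_self]
      simp [qfact]

lemma qint_dvd_qfact : ∀ n p, 0 < p → p ≤ n → qint p ∣ qfact n
  | 0, p, hp, h => by omega
  | n + 1, p, hp, h => by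
    rcases Nat.lt_or_ge p (n+1) with h1 | h1
    · exact Dvd.dvd.mul_left (qint_dvd_qfact n p hp (by omega)) _
    · have : p = n + 1 := by omega
      subst this
      exact Dvd.intro _ rfl

/-- for a prime `p` and `a, k < p` with `a + k ≥ p`,
`[p]_q` divides `[a+k choose a]_q` in `ℤ[q]`. -/
theorem stmt9 (p a k : ℕ) (hp : p.Prime) (ha : a < p) (hk : k < p) (hak : p ≤ a + k) :
    qint p ∣ qbinom (a + k) a := by
  haveI : Fact p.Prime := ⟨hp⟩
  have hcyc : qint p = cyclotomic p ℤ := by rw [cyclotomic_prime]; rfl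
  have hprime : Prime (qint p) := by
    rw [hcyc]
    exact (cyclotomic.irreducible hp.pos).prime
  have hdeg : (qint p).natDegree = p - 1 := by
    rw [hcyc, natDegree_cyclotomic, Nat.totient_prime hp]
  -- qint p does not divide qfact m for m < p
  have hnotdvd : ∀ m, m < p → ¬ qint p ∣ qfact m := by
    intro m
    induction m with
    | zero => intro _ hd
              exact hprime.not_unit (isUnit_of_dvd_one hd)
    | succ m ih =>
      intro hm hd
      rcases hprime.dvd_mul.mp hd with h1 | h2
      · have := Polynomial.natDegree_le_of_dvd h1 (qint_ne_zero (by omega))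
        have := qint_natDegree_le (m+1)
        omega
      · exact ih (by omega) h2
  have hmain := qbinom_mul_qfact (a + k) a (by omega)
  rw [show a + k - a = k from by omega] at hmain
  have hd : qint p ∣ qbinom (a + k) a * (qfact a * qfact k) := by
    rw [hmain]; exact qint_dvd_qfact (a + k) p hp.pos hak
  rcases hprime.dvd_mul.mp hd with h | h
  · exact h
  · rcases hprime.dvd_mul.mp h with h | h
    · exact absurd h (hnotdvd a ha)
    · exact absurd h (hnotdvd k hk)
end
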